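/- Let the plane-wave ansatz Zₘ(x,y,z,τ) = Aₘ·exp(2π(f_τ·τ + f_x·x + f_y·y + f_z·z)·u) for m = 1,2, where u is a fixed quaternion with u² = -1 and A₁, A₂ are quaternion constants commuting with u, not both zero. If ∂Z₁/∂τ = D₃Z₂ and ∂Z₂/∂τ = D₃*Z₁ with D₃ = i∂/∂x + j∂/∂y + k∂/∂z, then f_τ² = f_x² + f_y² + f_z². -/

import Mathlib

open Real
open scoped Quaternion

noncomputable def qI : ℍ[ℝ] := ⟨0, 1, 0, 0⟩
noncomputable def qJ : ℍ[ℝ] := ⟨0, 0, 1, 0⟩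
noncomputable def qK : ℍ[ℝ] := ⟨0, 0, 0, 1⟩

/-- `expU u θ = cos θ + u sin θ`, the exponential `exp (θ u)` for `u ^ 2 = -1`. -/
noncomputable def expU (u : ℍ[ℝ]) (θ : ℝ) : ℍ[ℝ] :=
  Real.cos θ • (1 : ℍ[ℝ]) + Real.sin θ • u

lemma deriv_mul_expU (A u : ℍ[ℝ]) (c : ℝ) :
    deriv (fun t : ℝ => A * expU u (c * t)) 0 = c • (A * u) := by
  have h1 : HasDerivAt (fun t : ℝ => Real.cos (c * t)) (0 : ℝ) 0 := by
    have := (Real.hasDerivAt_cos (c * 0)).comp 0 ((hasDerivAt_id (0:ℝ)).const_mul c)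
    simpa [Function.comp_def] using this
  have h2 : HasDerivAt (fun t : ℝ => Real.sin (c * t)) c 0 := by
    have := (Real.hasDerivAt_sin (c * 0)).comp 0 ((hasDerivAt_id (0:ℝ)).const_mul c)
    simpa [Function.comp_def] using this
  have h : HasDerivAt (fun t : ℝ => Real.cos (c * t) • A + Real.sin (c * t) • (A * u))
      ((0:ℝ) • A + c • (A * u)) 0 := (h1.smul_const A).add (h2.smul_const (A * u))
  have heq : (fun t : ℝ => A * expU u (c * t)) =
      fun t : ℝ => Real.cos (c * t) • A + Real.sin (c * t) • (A * u) := by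
    funext t
    simp [expU, mul_add, mul_smul_comm]
  rw [heq]
  simpa using h.deriv

theorem stmt_16 (fτ fx fy fz : ℝ) (u A₁ A₂ : ℍ[ℝ])
    (hu : u ^ 2 = -1) (hA₁u : A₁ * u = u * A₁) (hA₂u : A₂ * u = u * A₂)
    (hA : ¬(A₁ = 0 ∧ A₂ = 0))
    (Z₁ Z₂ : ℝ → ℝ → ℝ → ℝ → ℍ[ℝ])
    (hZ₁ : ∀ x y z τ : ℝ,
      Z₁ x y z τ = A₁ * expU u (2 * π * (fτ * τ + fx * x + fy * y + fz * z)))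
    (hZ₂ : ∀ x y z τ : ℝ,
      Z₂ x y z τ = A₂ * expU u (2 * π * (fτ * τ + fx * x + fy * y + fz * z)))
    (hs1 : ∀ x y z τ : ℝ,
      deriv (fun t => Z₁ x y z t) τ =
        qI * deriv (fun a => Z₂ a y z τ) x + qJ * deriv (fun b => Z₂ x b z τ) y +
          qK * deriv (fun c => Z₂ x y c τ) z)
    (hs2 : ∀ x y z τ : ℝ,
      deriv (fun t => Z₂ x y z t) τ =
        -(qI * deriv (fun a => Z₁ a y z τ) x + qJ * deriv (fun b => Z₁ x b z τ) y +
            qK * deriv (fun c => Z₁ x y c τ) z)) :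
    fτ ^ 2 = fx ^ 2 + fy ^ 2 + fz ^ 2 := by
  have huu : u * u = -1 := by rw [← sq]; exact hu
  have hun : u * -u = 1 := by rw [mul_neg, huu, neg_neg]
  -- derivatives at the origin
  have dZ1τ : deriv (fun t => Z₁ 0 0 0 t) 0 = (2 * π * fτ) • (A₁ * u) := by
    have h : (fun t => Z₁ 0 0 0 t) = fun t : ℝ => A₁ * expU u ((2 * π * fτ) * t) := by
      funext t; rw [hZ₁]; ring_nf
    rw [h, deriv_mul_expU]
  have dZ2τ : deriv (fun t => Z₂ 0 0 0 t) 0 = (2 * π * fτ) • (A₂ * u) := by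
    have h : (fun t => Z₂ 0 0 0 t) = fun t : ℝ => A₂ * expU u ((2 * π * fτ) * t) := by
      funext t; rw [hZ₂]; ring_nf
    rw [h, deriv_mul_expU]
  have dZ1x : deriv (fun a => Z₁ a 0 0 0) 0 = (2 * π * fx) • (A₁ * u) := by
    have h : (fun a => Z₁ a 0 0 0) = fun a : ℝ => A₁ * expU u ((2 * π * fx) * a) := by
      funext a; rw [hZ₁]; ring_nf
    rw [h, deriv_mul_expU]
  have dZ1y : deriv (fun b => Z₁ 0 b 0 0) 0 = (2 * π * fy) • (A₁ * u) := by
    have h : (fun b => Z₁ 0 b 0 0) = fun b : ℝ => A₁ * expU u ((2 * π * fy) * b) := by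
      funext b; rw [hZ₁]; ring_nf
    rw [h, deriv_mul_expU]
  have dZ1z : deriv (fun c => Z₁ 0 0 c 0) 0 = (2 * π * fz) • (A₁ * u) := by
    have h : (fun c => Z₁ 0 0 c 0) = fun c : ℝ => A₁ * expU u ((2 * π * fz) * c) := by
      funext c; rw [hZ₁]; ring_nf
    rw [h, deriv_mul_expU]
  have dZ2x : deriv (fun a => Z₂ a 0 0 0) 0 = (2 * π * fx) • (A₂ * u) := by
    have h : (fun a => Z₂ a 0 0 0) = fun a : ℝ => A₂ * expU u ((2 * π * fx) * a) := by
      funext a; rw [hZ₂]; ring_nf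
    rw [h, deriv_mul_expU]
  have dZ2y : deriv (fun b => Z₂ 0 b 0 0) 0 = (2 * π * fy) • (A₂ * u) := by
    have h : (fun b => Z₂ 0 b 0 0) = fun b : ℝ => A₂ * expU u ((2 * π * fy) * b) := by
      funext b; rw [hZ₂]; ring_nf
    rw [h, deriv_mul_expU]
  have dZ2z : deriv (fun c => Z₂ 0 0 c 0) 0 = (2 * π * fz) • (A₂ * u) := by
    have h : (fun c => Z₂ 0 0 c 0) = fun c : ℝ => A₂ * expU u ((2 * π * fz) * c) := by
      funext c; rw [hZ₂]; ring_nf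
    rw [h, deriv_mul_expU]
  -- the two equations at the origin
  have E1 := hs1 0 0 0 0
  have E2 := hs2 0 0 0 0
  rw [dZ1τ, dZ2x, dZ2y, dZ2z] at E1
  rw [dZ2τ, dZ1x, dZ1y, dZ1z] at E2
  simp only [mul_smul_comm, mul_smul, ← smul_add, ← smul_neg] at E1 E2
  have e1 : fτ • (A₁ * u) =
      fx • (qI * (A₂ * u)) + (fy • (qJ * (A₂ * u)) + fz • (qK * (A₂ * u))) := by
    have t := smul_right_injective ℍ[ℝ] (by norm_num : (2:ℝ) ≠ 0) E1
    have t2 := smul_right_injective ℍ[ℝ] Real.pi_ne_zero t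
    simpa [add_assoc] using t2
  have e2 : fτ • (A₂ * u) =
      -(fx • (qI * (A₁ * u)) + (fy • (qJ * (A₁ * u)) + fz • (qK * (A₁ * u)))) := by
    have t := smul_right_injective ℍ[ℝ] (by norm_num : (2:ℝ) ≠ 0) E2
    have t2 := smul_right_injective ℍ[ℝ] Real.pi_ne_zero t
    simpa [add_assoc] using t2
  -- multiply on the right by -u
  have e1' : fτ • A₁ = fx • (qI * A₂) + (fy • (qJ * A₂) + fz • (qK * A₂)) := by
    have h := congrArg (fun w : ℍ[ℝ] => w * (-u)) e1
    simp only [add_mul, smul_mul_assoc, mul_assoc, mul_neg, huu, neg_neg, mul_one,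
      smul_neg, mul_neg_one, neg_add] at h
    linear_combination (norm := module) h
  have e2' : fτ • A₂ = -(fx • (qI * A₁) + (fy • (qJ * A₁) + fz • (qK * A₁))) := by
    have h := congrArg (fun w : ℍ[ℝ] => w * (-u)) e2
    simp only [add_mul, neg_mul, smul_mul_assoc, mul_assoc, mul_neg, huu, neg_neg, mul_one,
      smul_neg, mul_neg_one, neg_add] at h
    linear_combination (norm := module) h
  -- package as multiplication by Q
  set Q : ℍ[ℝ] := ⟨0, fx, fy, fz⟩ with hQdef
  have hQrep : fx • qI + fy • qJ + fz • qK = Q := by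
    ext <;> simp [hQdef] <;> simp [qI, qJ, qK]
  have hQ : ∀ B : ℍ[ℝ], fx • (qI * B) + fy • (qJ * B) + fz • (qK * B) = Q * B := by
    intro B
    rw [← smul_mul_assoc, ← smul_mul_assoc, ← smul_mul_assoc, ← add_mul, ← add_mul, hQrep]
  have hQQ : Q * Q = (-(fx ^ 2 + fy ^ 2 + fz ^ 2)) • (1 : ℍ[ℝ]) := by
    ext <;>
      simp only [Quaternion.re_mul, Quaternion.imI_mul, Quaternion.imJ_mul,
        Quaternion.imK_mul] <;> simp [hQdef] <;> ring
  have e1'' : fτ • A₁ = Q * A₂ := by rw [e1', ← add_assoc, hQ]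
  have e2'' : fτ • A₂ = -(Q * A₁) := by rw [e2', ← add_assoc, hQ]
  have h1 : (fτ ^ 2) • A₁ = (fx ^ 2 + fy ^ 2 + fz ^ 2) • A₁ := by
    calc (fτ ^ 2) • A₁ = fτ • (fτ • A₁) := by rw [smul_smul, ← sq]
      _ = fτ • (Q * A₂) := by rw [e1'']
      _ = Q * (fτ • A₂) := (mul_smul_comm _ _ _).symm
      _ = Q * (-(Q * A₁)) := by rw [e2'']
      _ = -((Q * Q) * A₁) := by rw [mul_neg, mul_assoc]
      _ = -((((-(fx ^ 2 + fy ^ 2 + fz ^ 2))) • (1 : ℍ[ℝ])) * A₁) := by rw [hQQ]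
      _ = (fx ^ 2 + fy ^ 2 + fz ^ 2) • A₁ := by
          rw [smul_mul_assoc, one_mul, neg_smul, neg_neg]
  have h2 : (fτ ^ 2) • A₂ = (fx ^ 2 + fy ^ 2 + fz ^ 2) • A₂ := by
    calc (fτ ^ 2) • A₂ = fτ • (fτ • A₂) := by rw [smul_smul, ← sq]
      _ = fτ • (-(Q * A₁)) := by rw [e2'']
      _ = -(Q * (fτ • A₁)) := by rw [smul_neg, mul_smul_comm]
      _ = -(Q * (Q * A₂)) := by rw [e1'']
      _ = -((Q * Q) * A₂) := by rw [mul_assoc]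
      _ = -((((-(fx ^ 2 + fy ^ 2 + fz ^ 2))) • (1 : ℍ[ℝ])) * A₂) := by rw [hQQ]
      _ = (fx ^ 2 + fy ^ 2 + fz ^ 2) • A₂ := by
          rw [smul_mul_assoc, one_mul, neg_smul, neg_neg]
  by_contra hne
  have hs : fτ ^ 2 - (fx ^ 2 + fy ^ 2 + fz ^ 2) ≠ 0 := sub_ne_zero.mpr hne
  have z1 : A₁ = 0 := by
    have hz : (fτ ^ 2 - (fx ^ 2 + fy ^ 2 + fz ^ 2)) • A₁ = 0 := by
      rw [sub_smul, h1, sub_self]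
    exact (smul_eq_zero.mp hz).resolve_left hs
  have z2 : A₂ = 0 := by
    have hz : (fτ ^ 2 - (fx ^ 2 + fy ^ 2 + fz ^ 2)) • A₂ = 0 := by
      rw [sub_smul, h2, sub_self]
    exact (smul_eq_zero.mp hz).resolve_left hs
  exact hA ⟨z1, z2⟩
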